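/- arXiv:math/9812058 — 2 statements merged into one kernel-verified Lean document; each statement's English description precedes it below -/
import Mathlib

section
/- Let R be an integral domain of characteristic zero, and let (f_{ij}) be a g×g matrix with entries in R[[t]] that is invertible over R[[t]]. Then there exists a unique collection of power series φ_1,…,φ_g ∈ t·R[[t]] such that for each i, ∑_{j=1}^g f_{ij}(φ_j(t))·φ_j'(t) equals 1 if i = 1 and equals 0 otherwise. -/
/-! The coefficient of `t ^ n` in `∑ⱼ f i j (φⱼ) φⱼ'` depends only on the coefficients of the
`φⱼ` up to `t ^ (n + 1)`, and on those of `t ^ (n + 1)` only through the term `(n + 1) A c`, where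
`A` is the constant-term matrix of `f` and `c` the vector of these coefficients. As `n + 1` and
`A` are invertible, the coefficients of a solution are determined recursively from the
prescribed right-hand side: this gives uniqueness, and existence as the limit of the successive
approximations. -/

open PowerSeries Finset in
/-- Composition `f(g)` of formal power series, valid when `g` has zero constant term. -/
noncomputable def psComp {R : Type*} [CommRing R] (f g : PowerSeries R) : PowerSeries R :=
  PowerSeries.mk fun n => ∑ m ∈ Finset.range (n + 1),
    PowerSeries.coeff m f * PowerSeries.coeff n (g ^ m)

open PowerSeries Finset
open scoped Matrix

namespace PowerSeries

variable {R : Type*} [CommRing R]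

theorem coeff_eq_of_trunc_eq {φ ψ : R⟦X⟧} {n k : ℕ} (h : trunc n φ = trunc n ψ) (hk : k < n) :
    coeff k φ = coeff k ψ := by
  rw [← coeff_coe_trunc_of_lt hk, h, coeff_coe_trunc_of_lt hk]

end PowerSeries

section Composition

variable {R : Type*} [CommRing R]

theorem coeff_psComp (f φ : R⟦X⟧) (n : ℕ) :
    coeff n (psComp f φ) = ∑ m ∈ range (n + 1), coeff m f * coeff n (φ ^ m) :=
  coeff_mk _ _

theorem coeff_zero_psComp (f φ : R⟦X⟧) : coeff 0 (psComp f φ) = constantCoeff f := by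
  simp [coeff_psComp]

theorem trunc_psComp_eq_of_trunc_eq (f : R⟦X⟧) {φ ψ : R⟦X⟧} {n : ℕ}
    (h : trunc n φ = trunc n ψ) : trunc n (psComp f φ) = trunc n (psComp f ψ) := by
  ext k
  simp only [coeff_trunc]
  split_ifs with hk
  · have hpow (m : ℕ) : trunc n (φ ^ m) = trunc n (ψ ^ m) := by
      rw [← trunc_trunc_pow, h, trunc_trunc_pow]
    simp only [coeff_psComp, coeff_eq_of_trunc_eq (hpow _) hk]
  · rfl

theorem coeff_psComp_mul_derivative_sub_of_trunc_eq (f : R⟦X⟧) {φ ψ : R⟦X⟧} {n : ℕ}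
    (h : trunc (n + 1) φ = trunc (n + 1) ψ) :
    coeff n (psComp f φ * d⁄dX R φ) - coeff n (psComp f ψ * d⁄dX R ψ) =
      (n + 1) * (constantCoeff f * (coeff (n + 1) φ - coeff (n + 1) ψ)) := by
  have hcomp := trunc_psComp_eq_of_trunc_eq f h
  simp only [coeff_mul, Nat.sum_antidiagonal_eq_sum_range_succ_mk, sum_range_succ']
  have hlower : ∑ k ∈ range n, coeff (k + 1) (psComp f φ) * coeff (n - (k + 1)) (d⁄dX R φ) =
      ∑ k ∈ range n, coeff (k + 1) (psComp f ψ) * coeff (n - (k + 1)) (d⁄dX R ψ) :=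
    sum_congr rfl fun k hk => by
      have hk : k < n := mem_range.mp hk
      rw [coeff_derivative, coeff_derivative, coeff_eq_of_trunc_eq hcomp (by omega),
        coeff_eq_of_trunc_eq h (by omega)]
  rw [hlower, add_sub_add_left_eq_sub, coeff_zero_psComp, coeff_zero_psComp, coeff_derivative,
    coeff_derivative, Nat.sub_zero]
  ring

end Composition

section Pullback

variable {R ι : Type*} [CommRing R] [Fintype ι]

/-- The pullback of the differential forms `∑ⱼ f i j dtⱼ` along the formal curve `t ↦ φ t`. -/
noncomputable def pullbackForms (f : Matrix ι ι R⟦X⟧) (φ : ι → R⟦X⟧) (i : ι) : R⟦X⟧ :=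
  ∑ j, psComp (f i j) (φ j) * d⁄dX R (φ j)

theorem coeff_pullbackForms_sub_of_trunc_eq (f : Matrix ι ι R⟦X⟧) {φ ψ : ι → R⟦X⟧} {n : ℕ}
    (h : ∀ j, trunc (n + 1) (φ j) = trunc (n + 1) (ψ j)) :
    (fun i => coeff n (pullbackForms f φ i) - coeff n (pullbackForms f ψ i)) =
      (n + 1) • f.map constantCoeff *ᵥ fun j => coeff (n + 1) (φ j) - coeff (n + 1) (ψ j) := by
  ext i
  simp only [pullbackForms, map_sum, ← sum_sub_distrib,
    coeff_psComp_mul_derivative_sub_of_trunc_eq _ (h _), Pi.smul_apply, nsmul_eq_mul,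
    Matrix.mulVec, dotProduct, Matrix.map_apply, mul_sum]
  push_cast
  rfl

end Pullback

section CharZero

variable {R ι : Type*} [CommRing R] [Algebra ℚ R] [Fintype ι] [DecidableEq ι]
  {A : Matrix ι ι R}

theorem Matrix.succ_nsmul_mulVec_rat_inv_smul_inv_mulVec (hA : IsUnit A) (n : ℕ) (v : ι → R) :
    (n + 1) • A *ᵥ ((n + 1 : ℚ)⁻¹ • A⁻¹ *ᵥ v) = v := by
  rw [Matrix.mulVec_smul, Matrix.mulVec_mulVec,
    Matrix.mul_nonsing_inv _ ((Matrix.isUnit_iff_isUnit_det A).mp hA), Matrix.one_mulVec,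
    ← Nat.cast_smul_eq_nsmul ℚ, Nat.cast_add_one, smul_inv_smul₀ (by positivity)]

theorem Matrix.eq_zero_of_succ_nsmul_mulVec_eq_zero (hA : IsUnit A) {n : ℕ} {v : ι → R}
    (h : (n + 1) • A *ᵥ v = 0) : v = 0 := by
  rw [← Nat.cast_smul_eq_nsmul ℚ] at h
  have hAv : A *ᵥ v = 0 := (smul_eq_zero.mp h).resolve_left (by positivity)
  exact Matrix.mulVec_injective_of_isUnit hA (hAv.trans (Matrix.mulVec_zero A).symm)

variable (f : Matrix ι ι R⟦X⟧) (τ : ι → R⟦X⟧)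

theorem eq_of_pullbackForms_eq (hA : IsUnit (f.map constantCoeff)) {φ ψ : ι → R⟦X⟧}
    (hφ : ∀ j, constantCoeff (φ j) = 0) (hψ : ∀ j, constantCoeff (ψ j) = 0)
    (h : pullbackForms f φ = pullbackForms f ψ) : φ = ψ := by
  have htrunc (n : ℕ) (j : ι) : trunc (n + 1) (φ j) = trunc (n + 1) (ψ j) := by
    induction n generalizing j with
    | zero => simp [trunc_one_left, hφ, hψ]
    | succ n ih =>
      have hcoeff := Matrix.eq_zero_of_succ_nsmul_mulVec_eq_zero hA <|
        (coeff_pullbackForms_sub_of_trunc_eq f ih).symm.trans <| by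
          rw [h]; exact funext fun _ => sub_self _
      rw [trunc_succ, trunc_succ (ψ j), ih j, sub_eq_zero.mp (congrFun hcoeff j)]
  funext j
  ext k
  exact coeff_eq_of_trunc_eq (htrunc k j) k.lt_succ_self

namespace pullbackForms

/-- `approx f τ n` solves `pullbackForms f φ = τ` modulo `t ^ n`; the coefficient of
`t ^ (n + 1)` is then chosen so as to fix the coefficient of `t ^ n`. -/
noncomputable def approx : ℕ → ι → R⟦X⟧
  | 0 => 0
  | n + 1 => fun j => approx n j + monomial (n + 1)
      (((n + 1 : ℚ)⁻¹ • (f.map constantCoeff)⁻¹ *ᵥ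
        fun i => coeff n (τ i) - coeff n (pullbackForms f (approx n) i)) j)

theorem trunc_approx_of_le {n m : ℕ} (hnm : n ≤ m) (j : ι) :
    trunc (n + 1) (approx f τ m j) = trunc (n + 1) (approx f τ n j) := by
  induction m, hnm using Nat.le_induction with
  | base => rfl
  | succ m hnm ih =>
    rw [approx, map_add, ih, add_eq_left]
    ext k
    rw [coeff_trunc, coeff_monomial]
    split_ifs <;> first | omega | rfl

theorem coeff_pullbackForms_approx_succ (hA : IsUnit (f.map constantCoeff)) (n : ℕ)
    (i : ι) : coeff n (pullbackForms f (approx f τ (n + 1)) i) = coeff n (τ i) := by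
  set v : ι → R := fun i => coeff n (τ i) - coeff n (pullbackForms f (approx f τ n) i)
  have hstep : (fun j => coeff (n + 1) (approx f τ (n + 1) j) -
      coeff (n + 1) (approx f τ n j)) = (n + 1 : ℚ)⁻¹ • (f.map constantCoeff)⁻¹ *ᵥ v := by
    funext j
    simp [approx, v]
  have h := coeff_pullbackForms_sub_of_trunc_eq f (trunc_approx_of_le f τ n.le_succ)
  rw [hstep, Matrix.succ_nsmul_mulVec_rat_inv_smul_inv_mulVec hA] at h
  exact sub_left_inj.mp (congrFun h i)

noncomputable def solution (j : ι) : R⟦X⟧ :=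
  mk fun k => coeff k (approx f τ k j)

theorem trunc_solution (n : ℕ) (j : ι) :
    trunc (n + 1) (solution f τ j) = trunc (n + 1) (approx f τ n j) := by
  ext k
  simp only [coeff_trunc, solution, coeff_mk]
  split_ifs with hk
  · exact coeff_eq_of_trunc_eq (trunc_approx_of_le f τ (Nat.lt_succ_iff.mp hk) j).symm
      k.lt_succ_self
  · rfl

theorem constantCoeff_solution (j : ι) : constantCoeff (solution f τ j) = 0 := by
  simp [solution, approx]

end pullbackForms

open pullbackForms in
theorem pullbackForms_solution (hA : IsUnit (f.map constantCoeff)) :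
    pullbackForms f (solution f τ) = τ := by
  funext i
  ext n
  have htop (j : ι) : coeff (n + 1) (solution f τ j) = coeff (n + 1) (approx f τ (n + 1) j) :=
    coeff_mk _ _
  have h := coeff_pullbackForms_sub_of_trunc_eq f (φ := solution f τ)
    (ψ := approx f τ (n + 1)) fun j => (trunc_solution f τ n j).trans
      (trunc_approx_of_le f τ n.le_succ j).symm
  simp only [htop, sub_self, ← Pi.zero_def, Matrix.mulVec_zero, smul_zero] at h
  rw [← coeff_pullbackForms_approx_succ f τ hA n i, ← sub_eq_zero]
  exact congrFun h i

open pullbackForms in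
theorem existsUnique_pullbackForms_eq (hA : IsUnit (f.map constantCoeff)) :
    ∃! φ : ι → R⟦X⟧, (∀ j, constantCoeff (φ j) = 0) ∧ pullbackForms f φ = τ :=
  ⟨solution f τ, ⟨constantCoeff_solution f τ, pullbackForms_solution f τ hA⟩,
    fun _ hφ => eq_of_pullbackForms_eq f hA hφ.1 (constantCoeff_solution f τ)
      (hφ.2.trans (pullbackForms_solution f τ hA).symm)⟩

end CharZero

open PowerSeries in
theorem stmt_0_general {R : Type*} [CommRing R] [Algebra ℚ R] (g : ℕ)
    (f : Matrix (Fin g) (Fin g) (PowerSeries R)) (hf : IsUnit f) :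
    ∃! φ : Fin g → PowerSeries R,
      (∀ j, PowerSeries.constantCoeff (φ j) = 0) ∧
      ∀ i, ∑ j, psComp (f i j) (φ j) * (φ j).derivativeFun
        = if (i : ℕ) = 0 then 1 else 0 := by
  have hA : IsUnit (f.map constantCoeff) := by
    simpa using hf.map (constantCoeff (R := R)).mapMatrix
  have h := existsUnique_pullbackForms_eq f (fun i => if (i : ℕ) = 0 then 1 else 0) hA
  simp only [funext_iff] at h
  exact h

open PowerSeries in
/-- Lemma `curves`: over an integral domain `R` of characteristic zero, for an invertible
`g × g` matrix `f` over `R[[t]]` there is a unique collection `φ_1, …, φ_g ∈ t·R[[t]]`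
with `∑_j f_{ij}(φ_j) · φ_j' = δ_{i1}`. -/
theorem stmt_0 {R : Type*} [CommRing R] [IsDomain R] [Algebra ℚ R] (g : ℕ)
    (f : Matrix (Fin g) (Fin g) (PowerSeries R)) (hf : IsUnit f) :
    ∃! φ : Fin g → PowerSeries R,
      (∀ j, PowerSeries.constantCoeff (φ j) = 0) ∧
      ∀ i, ∑ j, psComp (f i j) (φ j) * (φ j).derivativeFun
        = if (i : ℕ) = 0 then 1 else 0 :=
  stmt_0_general g f hf
end

section
/- Let k be a field of characteristic zero and let (f_{ij}) be a g×g matrix with entries in k[[t]] whose constant-term matrix (f_{ij}(0)) is invertible. Then there exist power series φ_1,…,φ_g ∈ t·k[[t]] with φ_1'(0) determined and, in particular with the property that ∑_j f_{1j}(φ_j)·φ_j' = 1 and ∑_j f_{ij}(φ_j)·φ_j' = 0 for i ≥ 2; moreover the linear coefficients (φ_1'(0),…,φ_g'(0)) equal the first column of the inverse of the matrix (f_{ij}(0)). -/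
section CourseOfValues

variable {V : Type*}

def seqOfStep (c₀ : V) (step : ℕ → (ℕ → V) → V) : ℕ → V
  | 0 => c₀
  | n + 1 => step n fun m => if _ : m ≤ n then seqOfStep c₀ step m else c₀

theorem exists_seq_succ_eq_step (c₀ : V) (step : ℕ → (ℕ → V) → V)
    (hstep : ∀ n c c', (∀ m ≤ n, c m = c' m) → step n c = step n c') :
    ∃ c : ℕ → V, c 0 = c₀ ∧ ∀ n, c (n + 1) = step n c := by
  refine ⟨seqOfStep c₀ step, by rw [seqOfStep], fun n => ?_⟩
  rw [seqOfStep]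
  exact hstep n _ _ fun m hm => by simp [hm]

end CourseOfValues

namespace PowerSeries

open Finset Matrix

variable {R : Type*} [CommRing R]

theorem constantCoeff_psComp (F ψ : R⟦X⟧) : constantCoeff (psComp F ψ) = constantCoeff F := by
  rw [← coeff_zero_eq_constantCoeff_apply, psComp, coeff_mk]
  simp

theorem trunc_psComp_congr {n : ℕ} {ψ ψ' : R⟦X⟧} (h : trunc n ψ = trunc n ψ') (F : R⟦X⟧) :
    trunc n (psComp F ψ) = trunc n (psComp F ψ') := by
  ext m
  simp only [coeff_trunc, psComp, coeff_mk]
  split_ifs with hm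
  · refine sum_congr rfl fun i _ => ?_
    have hpow : trunc n (ψ ^ i) = trunc n (ψ' ^ i) := by
      rw [← trunc_trunc_pow, h, trunc_trunc_pow]
    have := congrArg (Polynomial.coeff · m) hpow
    simp only [coeff_trunc, hm, if_true] at this
    rw [this]
  · rfl

noncomputable def coeffMulTail (A B : R⟦X⟧) (n : ℕ) : R :=
  ∑ a ∈ range n, coeff (a + 1) A * coeff (n - (a + 1)) B

theorem coeff_mul_eq_constantCoeff_mul_add_coeffMulTail (A B : R⟦X⟧) (n : ℕ) :
    coeff n (A * B) = constantCoeff A * coeff n B + coeffMulTail A B n := by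
  rw [coeff_mul, Nat.sum_antidiagonal_eq_sum_range_succ_mk, sum_range_succ', coeffMulTail,
    coeff_zero_eq_constantCoeff_apply, Nat.sub_zero, add_comm]

theorem coeffMulTail_congr {n : ℕ} {A A' B B' : R⟦X⟧} (hA : trunc (n + 1) A = trunc (n + 1) A')
    (hB : trunc n B = trunc n B') : coeffMulTail A B n = coeffMulTail A' B' n := by
  refine sum_congr rfl fun a ha => ?_
  rw [mem_range] at ha
  have hA := congrArg (Polynomial.coeff · (a + 1)) hA
  have hB := congrArg (Polynomial.coeff · (n - (a + 1))) hB
  simp only [coeff_trunc, show a + 1 < n + 1 by omega, show n - (a + 1) < n by omega,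
    if_true] at hA hB
  rw [hA, hB]

theorem coeffMulTail_psComp_derivative_congr {n : ℕ} {ψ ψ' : R⟦X⟧}
    (h : trunc (n + 1) ψ = trunc (n + 1) ψ') (F : R⟦X⟧) :
    coeffMulTail (psComp F ψ) (d⁄dX R ψ) n = coeffMulTail (psComp F ψ') (d⁄dX R ψ') n :=
  coeffMulTail_congr (trunc_psComp_congr h F) (by rw [trunc_derivative, trunc_derivative, h])

variable {k : Type*} [Field k] {ι : Type*} [Fintype ι]

theorem coeff_sum_psComp_mul_derivative (F ψ : ι → k⟦X⟧) (n : ℕ) :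
    coeff n (∑ j, psComp (F j) (ψ j) * d⁄dX k (ψ j))
      = ∑ j, constantCoeff (F j) * ((n + 1) * coeff (n + 1) (ψ j))
        + ∑ j, coeffMulTail (psComp (F j) (ψ j)) (d⁄dX k (ψ j)) n := by
  simp only [map_sum, coeff_mul_eq_constantCoeff_mul_add_coeffMulTail, constantCoeff_psComp,
    coeff_derivative, sum_add_distrib, mul_comm (coeff (n + 1) _)]

theorem exists_sum_psComp_mul_derivative_eq [CharZero k] [DecidableEq ι]
    (f : Matrix ι ι k⟦X⟧) (hf : IsUnit (f.map constantCoeff)) (b : ι → k⟦X⟧) :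
    ∃ φ : ι → k⟦X⟧, (∀ j, constantCoeff (φ j) = 0) ∧
      (∀ i, ∑ j, psComp (f i j) (φ j) * d⁄dX k (φ j) = b i) ∧
      ∀ j, coeff 1 (φ j) = ((f.map constantCoeff)⁻¹ *ᵥ fun i => constantCoeff (b i)) j := by
  set M := f.map constantCoeff
  let series (c : ℕ → ι → k) (j : ι) : k⟦X⟧ := mk fun m => c m j
  let tail (n : ℕ) (ψ : ι → k⟦X⟧) (i : ι) : k :=
    ∑ j, coeffMulTail (psComp (f i j) (ψ j)) (d⁄dX k (ψ j)) n
  let step (n : ℕ) (c : ℕ → ι → k) : ι → k :=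
    ((n : k) + 1)⁻¹ • M⁻¹ *ᵥ fun i => coeff n (b i) - tail n (series c) i
  have hstep : ∀ n c c', (∀ m ≤ n, c m = c' m) → step n c = step n c' := by
    intro n c c' h
    have htrunc : ∀ j, trunc (n + 1) (series c j) = trunc (n + 1) (series c' j) := by
      intro j; ext m
      simp only [coeff_trunc, series, coeff_mk]
      split_ifs with hm
      · rw [h m (by omega)]
      · rfl
    have htail : tail n (series c) = tail n (series c') := funext fun i =>
      sum_congr rfl fun j _ => coeffMulTail_psComp_derivative_congr (htrunc j) _
    simp only [step, htail]
  obtain ⟨c, hc0, hc⟩ := exists_seq_succ_eq_step 0 step hstep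
  have hMM : M * M⁻¹ = 1 := mul_nonsing_inv M ((isUnit_iff_isUnit_det M).mp hf)
  refine ⟨series c, fun j => ?_, fun i => ext fun n => ?_, fun j => ?_⟩
  · rw [← coeff_zero_eq_constantCoeff_apply, coeff_mk, hc0, Pi.zero_apply]
  · have hlin :
        M *ᵥ (((n : k) + 1) • c (n + 1)) = fun i => coeff n (b i) - tail n (series c) i := by
      rw [hc]
      simp only [step]
      rw [smul_smul, mul_inv_cancel₀ (Nat.cast_add_one_ne_zero n), one_smul, mulVec_mulVec, hMM,
        one_mulVec]
    rw [coeff_sum_psComp_mul_derivative, ← eq_sub_iff_add_eq]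
    simpa [mulVec, dotProduct, series, M] using congrFun hlin i
  · have htail0 : tail 0 (series c) = 0 := by ext i; simp [tail, coeffMulTail]
    rw [coeff_mk, hc]
    simp [step, htail0]

end PowerSeries

open PowerSeries in
/-- Over a field `k` of characteristic zero, given a `g × g` matrix over `k[[t]]` with
invertible constant-term matrix `M₀ = (f_{ij}(0))`, there exist `φ_1, …, φ_g ∈ t·k[[t]]`
solving `∑_j f_{ij}(φ_j)·φ_j' = δ_{i1}`, and whose linear coefficients `(φ_j)'(0)` form
the first column of `M₀⁻¹`. -/
theorem stmt_5 {k : Type*} [Field k] [CharZero k] (g : ℕ) (hg : 0 < g)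
    (f : Matrix (Fin g) (Fin g) (PowerSeries k))
    (hf0 : IsUnit (f.map (PowerSeries.constantCoeff))) :
    ∃ φ : Fin g → PowerSeries k,
      (∀ j, PowerSeries.constantCoeff (φ j) = 0) ∧
      (∀ i, ∑ j, psComp (f i j) (φ j) * (φ j).derivativeFun
        = if (i : ℕ) = 0 then 1 else 0) ∧
      ∀ j, PowerSeries.coeff 1 (φ j) = (f.map (PowerSeries.constantCoeff))⁻¹ j ⟨0, hg⟩ := by
  obtain ⟨φ, hφ0, hφ, hφ1⟩ :=
    exists_sum_psComp_mul_derivative_eq f hf0 fun i => if (i : ℕ) = 0 then 1 else 0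
  refine ⟨φ, hφ0, hφ, fun j => ?_⟩
  have hδ : (fun i : Fin g => constantCoeff (if (i : ℕ) = 0 then 1 else 0 : k⟦X⟧))
      = Pi.single ⟨0, hg⟩ 1 := by
    ext i
    simp [Pi.single_apply, Fin.ext_iff]
  rw [hφ1, hδ, Matrix.mulVec_single_one, Matrix.col_apply]
end
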